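/- Let a₁, a₂, a₃ ∈ (0,1) with a₁ + a₃ < 1, and let A₅ = [[0, a₂, 1], [1, 0, 0], [a₁, 1, a₃]]. Then the symmetric game with payoff matrix A₅ has exactly one symmetric Nash equilibrium x in the standard simplex of ℝ³, and this x has all three coordinates strictly positive. -/

import Mathlib

/-!
At a symmetric equilibrium `y` every pure strategy earns at most `yᵀA₅y`, with equality on the
support of `y`; hence a strategy earning strictly less than another one is not played. For `A₅`
this excludes every support other than the full one: the payoff vector is
`A₅y = (a₂y₁ + y₂, y₀, a₁y₀ + y₁ + a₃y₂)`, and each candidate boundary equilibrium has a pure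
strategy in its support that is strictly beaten. With full support the three payoffs coincide,
a linear system whose unique solution on the simplex is proportional to
`(1 - a₂a₃, 1 - a₁ - a₃, 1 - a₂ + a₁a₂)`. This vector is positive and equalises all payoffs, so
its normalisation is an equilibrium.
-/

/-- `x` is a symmetric Nash equilibrium of the symmetric game with payoff matrix `A`:
`x` lies in the standard simplex of `ℝ³` and `xᵀAx ≥ yᵀAx` for all `y` in the simplex. -/
def IsSymNash (A : Matrix (Fin 3) (Fin 3) ℝ) (x : Fin 3 → ℝ) : Prop :=
  (∀ j, 0 ≤ x j) ∧ (∑ j, x j = 1) ∧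
    ∀ y : Fin 3 → ℝ, (∀ j, 0 ≤ y j) → (∑ j, y j = 1) →
      dotProduct y (A.mulVec x) ≤ dotProduct x (A.mulVec x)

open Matrix

section StdSimplex

variable {ι : Type*} [Fintype ι]

theorem dotProduct_le_of_mem_stdSimplex {y u : ι → ℝ} {c : ℝ} (hy : y ∈ stdSimplex ℝ ι)
    (hu : ∀ j, u j ≤ c) : y ⬝ᵥ u ≤ c :=
  calc y ⬝ᵥ u ≤ ∑ j, y j * c :=
        Finset.sum_le_sum fun j _ => mul_le_mul_of_nonneg_left (hu j) (hy.1 j)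
    _ = c := by rw [← Finset.sum_mul, hy.2, one_mul]

theorem forall_mem_stdSimplex_dotProduct_le_iff [DecidableEq ι] {u : ι → ℝ} {c : ℝ} :
    (∀ y ∈ stdSimplex ℝ ι, y ⬝ᵥ u ≤ c) ↔ ∀ j, u j ≤ c :=
  ⟨fun h j => single_one_dotProduct j u ▸ h _ (single_mem_stdSimplex ℝ j),
    fun h _ hy => dotProduct_le_of_mem_stdSimplex hy h⟩

theorem apply_eq_dotProduct_of_pos {x u : ι → ℝ} (hx : x ∈ stdSimplex ℝ ι)
    (hu : ∀ j, u j ≤ x ⬝ᵥ u) {j : ι} (hj : 0 < x j) : u j = x ⬝ᵥ u := by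
  have hslack : ∑ i, x i * (x ⬝ᵥ u - u i) = 0 := by
    simp only [mul_sub, Finset.sum_sub_distrib, ← Finset.sum_mul, hx.2, one_mul, dotProduct,
      sub_self]
  have hj_slack := (Finset.sum_eq_zero_iff_of_nonneg fun i _ =>
    mul_nonneg (hx.1 i) (sub_nonneg.2 (hu i))).1 hslack j (Finset.mem_univ j)
  exact (sub_eq_zero.1 ((mul_eq_zero.1 hj_slack).resolve_left hj.ne')).symm

theorem inv_sum_smul_mem_stdSimplex {w : ι → ℝ} (hw : ∀ j, 0 ≤ w j) (hs : ∑ j, w j ≠ 0) :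
    (∑ j, w j)⁻¹ • w ∈ stdSimplex ℝ ι :=
  ⟨fun j => smul_nonneg (inv_nonneg.2 (Finset.sum_nonneg fun i _ => hw i)) (hw j), by
    simp only [Pi.smul_apply, smul_eq_mul, ← Finset.mul_sum, inv_mul_cancel₀ hs]⟩

end StdSimplex

theorem isSymNash_iff {A : Matrix (Fin 3) (Fin 3) ℝ} {x : Fin 3 → ℝ} :
    IsSymNash A x ↔ x ∈ stdSimplex ℝ (Fin 3) ∧ ∀ j, (A *ᵥ x) j ≤ x ⬝ᵥ A *ᵥ x := by
  rw [← forall_mem_stdSimplex_dotProduct_le_iff]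
  simp only [IsSymNash, stdSimplex, Set.mem_ofPred_eq, and_imp, and_assoc]

theorem isSymNash_of_mulVec_eq_const {A : Matrix (Fin 3) (Fin 3) ℝ} {x : Fin 3 → ℝ} {c : ℝ}
    (hx : x ∈ stdSimplex ℝ (Fin 3)) (hA : A *ᵥ x = fun _ => c) : IsSymNash A x := by
  refine isSymNash_iff.2 ⟨hx, fun j => ?_⟩
  simp only [hA, dotProduct, ← Finset.sum_mul, hx.2, one_mul, le_refl]

namespace IsSymNash

variable {A : Matrix (Fin 3) (Fin 3) ℝ} {x : Fin 3 → ℝ}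

theorem mulVec_eq_of_pos (h : IsSymNash A x) {j : Fin 3} (hj : 0 < x j) :
    (A *ᵥ x) j = x ⬝ᵥ A *ᵥ x :=
  apply_eq_dotProduct_of_pos (isSymNash_iff.1 h).1 (isSymNash_iff.1 h).2 hj

theorem eq_zero_of_mulVec_lt (h : IsSymNash A x) {i j : Fin 3} (hij : (A *ᵥ x) i < (A *ᵥ x) j) :
    x i = 0 := by
  refine le_antisymm (not_lt.1 fun hi => ?_) (h.1 i)
  exact (h.mulVec_eq_of_pos hi ▸ hij).not_ge ((isSymNash_iff.1 h).2 j)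

end IsSymNash

section ClassA5

variable (a₁ a₂ a₃ : ℝ)

def classA5 : Matrix (Fin 3) (Fin 3) ℝ := !![0, a₂, 1; 1, 0, 0; a₁, 1, a₃]

theorem classA5_mulVec (y : Fin 3 → ℝ) :
    classA5 a₁ a₂ a₃ *ᵥ y = ![a₂ * y 1 + y 2, y 0, a₁ * y 0 + y 1 + a₃ * y 2] := by
  ext j
  fin_cases j <;> simp [classA5, mulVec, dotProduct, Fin.sum_univ_three]

def classA5Weights : Fin 3 → ℝ := ![1 - a₂ * a₃, 1 - a₁ - a₃, 1 - a₂ + a₁ * a₂]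

noncomputable def classA5Equilibrium : Fin 3 → ℝ :=
  (∑ j, classA5Weights a₁ a₂ a₃ j)⁻¹ • classA5Weights a₁ a₂ a₃

variable {a₁ a₂ a₃}

theorem classA5Weights_pos (ha₁ : 0 ≤ a₁) (ha₂ : a₂ < 1) (ha₃ : 0 < a₃) (hsum : a₁ + a₃ < 1)
    (j : Fin 3) : 0 < classA5Weights a₁ a₂ a₃ j := by
  fin_cases j <;> simp only [classA5Weights, Fin.zero_eta, Fin.mk_one, Fin.reduceFinMk,
    Matrix.cons_val]
  · nlinarith [mul_pos ha₃ (sub_pos.2 ha₂)]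
  · linarith
  · nlinarith [mul_pos (sub_pos.2 ha₂) (by linarith : 0 < 1 - a₁)]

theorem sum_classA5Weights_pos (ha₁ : 0 ≤ a₁) (ha₂ : a₂ < 1) (ha₃ : 0 < a₃)
    (hsum : a₁ + a₃ < 1) : 0 < ∑ j, classA5Weights a₁ a₂ a₃ j :=
  Finset.sum_pos (fun j _ => classA5Weights_pos ha₁ ha₂ ha₃ hsum j) Finset.univ_nonempty

theorem classA5_mulVec_classA5Weights :
    classA5 a₁ a₂ a₃ *ᵥ classA5Weights a₁ a₂ a₃ = fun _ => 1 - a₂ * a₃ := by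
  ext j
  fin_cases j <;> simp only [classA5_mulVec, classA5Weights, Fin.zero_eta, Fin.mk_one,
    Fin.reduceFinMk, cons_val] <;> ring

theorem isSymNash_classA5Equilibrium (ha₁ : 0 ≤ a₁) (ha₂ : a₂ < 1) (ha₃ : 0 < a₃)
    (hsum : a₁ + a₃ < 1) : IsSymNash (classA5 a₁ a₂ a₃) (classA5Equilibrium a₁ a₂ a₃) := by
  refine isSymNash_of_mulVec_eq_const (c := (∑ j, classA5Weights a₁ a₂ a₃ j)⁻¹ * (1 - a₂ * a₃))
    (inv_sum_smul_mem_stdSimplex (fun j => (classA5Weights_pos ha₁ ha₂ ha₃ hsum j).le)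
      (sum_classA5Weights_pos ha₁ ha₂ ha₃ hsum).ne') ?_
  rw [classA5Equilibrium, mulVec_smul, classA5_mulVec_classA5Weights]
  rfl

theorem classA5Equilibrium_pos (ha₁ : 0 ≤ a₁) (ha₂ : a₂ < 1) (ha₃ : 0 < a₃)
    (hsum : a₁ + a₃ < 1) (j : Fin 3) : 0 < classA5Equilibrium a₁ a₂ a₃ j :=
  mul_pos (inv_pos.2 (sum_classA5Weights_pos ha₁ ha₂ ha₃ hsum))
    (classA5Weights_pos ha₁ ha₂ ha₃ hsum j)

theorem IsSymNash.classA5_pos (ha₁ : 0 ≤ a₁) (ha₂ : a₂ < 1) (ha₃ : 0 < a₃)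
    (hsum : a₁ + a₃ < 1) {y : Fin 3 → ℝ} (h : IsSymNash (classA5 a₁ a₂ a₃) y) (j : Fin 3) :
    0 < y j := by
  have hnn := h.1
  have hy : y 0 + y 1 + y 2 = 1 := by simpa only [Fin.sum_univ_three] using h.2.1
  have unplayed_of_lt := @h.eq_zero_of_mulVec_lt
  simp only [classA5_mulVec] at unplayed_of_lt
  have hy₀ : 0 < y 0 := by
    by_contra! h₀
    have hy₁ : y 1 = 0 := unplayed_of_lt (i := 1) (j := 2) (by simp only [Matrix.cons_val]; nlinarith [hnn 1, hnn 2])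
    have hy₂ : y 2 = 0 := unplayed_of_lt (i := 2) (j := 0) (by simp only [Matrix.cons_val]; nlinarith)
    linarith
  have hy₁ : 0 < y 1 := by
    by_contra! h₁
    have hy₀₂ : y 0 ≤ y 2 := not_lt.1 fun h₂₀ =>
      hy₀.ne' (unplayed_of_lt (i := 0) (j := 1) (by simp only [Matrix.cons_val]; nlinarith [hnn 1]))
    have hy₂ : y 2 = 0 := unplayed_of_lt (i := 2) (j := 0) (by simp only [Matrix.cons_val]; nlinarith [hnn 1])
    linarith
  have hy₂ : 0 < y 2 := by
    by_contra! h₂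
    exact hy₀.ne' (unplayed_of_lt (i := 0) (j := 2) (by simp only [Matrix.cons_val]; nlinarith [hnn 2]))
  fin_cases j <;> assumption

theorem eq_classA5Equilibrium_of_indifferent {y : Fin 3 → ℝ}
    (hs : ∑ j, classA5Weights a₁ a₂ a₃ j ≠ 0) (hy : y 0 + y 1 + y 2 = 1)
    (h₀₁ : a₂ * y 1 + y 2 = y 0) (h₂₁ : a₁ * y 0 + y 1 + a₃ * y 2 = y 0) :
    y = classA5Equilibrium a₁ a₂ a₃ := by
  have hS : ∑ j, classA5Weights a₁ a₂ a₃ j = 3 - a₁ - a₂ - a₃ + a₁ * a₂ - a₂ * a₃ := by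
    simp only [classA5Weights, Fin.sum_univ_three, Matrix.cons_val]
    ring
  ext j
  rw [classA5Equilibrium, Pi.smul_apply, smul_eq_mul, eq_inv_mul_iff_mul_eq₀ hs, hS]
  fin_cases j <;> simp only [classA5Weights, Fin.zero_eta, Fin.mk_one, Fin.reduceFinMk,
    Matrix.cons_val]
  · linear_combination (a₃ - 1) * h₀₁ + (a₂ - 1) * h₂₁ + (1 - a₂ * a₃) * hy
  · linear_combination (a₁ - a₃ - 1) * h₀₁ + 2 * h₂₁ + (1 - a₁ - a₃) * hy
  · linear_combination (2 - a₁) * h₀₁ + (-1 - a₂) * h₂₁ + (1 - a₂ + a₁ * a₂) * hy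

theorem IsSymNash.eq_classA5Equilibrium (ha₁ : 0 ≤ a₁) (ha₂ : a₂ < 1) (ha₃ : 0 < a₃)
    (hsum : a₁ + a₃ < 1) {y : Fin 3 → ℝ} (h : IsSymNash (classA5 a₁ a₂ a₃) y) :
    y = classA5Equilibrium a₁ a₂ a₃ := by
  have hpay (j : Fin 3) := h.mulVec_eq_of_pos (h.classA5_pos ha₁ ha₂ ha₃ hsum j)
  have hpay₀ := hpay 0
  have hpay₁ := hpay 1
  have hpay₂ := hpay 2
  simp only [classA5_mulVec, Matrix.cons_val] at hpay₀ hpay₁ hpay₂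
  have hy : y 0 + y 1 + y 2 = 1 := by simpa only [Fin.sum_univ_three] using h.2.1
  exact eq_classA5Equilibrium_of_indifferent (sum_classA5Weights_pos ha₁ ha₂ ha₃ hsum).ne' hy
    (by linarith) (by linarith)

end ClassA5

/-- The symmetric game with the given payoff matrix has exactly one symmetric Nash
equilibrium, and it is completely mixed. -/
theorem classA5_unique_completely_mixed (a₁ a₂ a₃ : ℝ)
    (h₁ : a₁ ∈ Set.Ioo (0:ℝ) 1) (h₂ : a₂ ∈ Set.Ioo (0:ℝ) 1) (h₃ : a₃ ∈ Set.Ioo (0:ℝ) 1)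
    (hsum : a₁ + a₃ < 1) :
    ∃ x : Fin 3 → ℝ, IsSymNash !![0, a₂, 1; 1, 0, 0; a₁, 1, a₃] x ∧ (∀ j, 0 < x j) ∧
      ∀ y : Fin 3 → ℝ, IsSymNash !![0, a₂, 1; 1, 0, 0; a₁, 1, a₃] y → y = x := by
  have ha₁ : 0 ≤ a₁ := h₁.1.le
  exact ⟨classA5Equilibrium a₁ a₂ a₃, isSymNash_classA5Equilibrium ha₁ h₂.2 h₃.1 hsum,
    classA5Equilibrium_pos ha₁ h₂.2 h₃.1 hsum,
    fun y hy => hy.eq_classA5Equilibrium ha₁ h₂.2 h₃.1 hsum⟩
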